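/- arXiv:1112.1895 — 8 statements merged into one kernel-verified Lean document; each statement's English description precedes it below -/
import Mathlib

section
/- The function φ(p) = Σ_{s=1}^S (B_s/B) log₂(σ_s² + Σ_{k=1}^K p_{k,s} g_{k,s}) is an exact potential for the game where each player k's utility is u_k(p) = Σ_s (B_s/B) log₂(1 + p_{k,s} g_{k,s}/(σ_s² + Σ_{j≠k} p_{j,s} g_{j,s})); that is, for all players k and all unilateral deviations p_k → p'_k, u_k(p_k, p_{-k}) − u_k(p'_k, p_{-k}) = φ(p_k, p_{-k}) − φ(p'_k, p_{-k}). -/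
open Finset

lemma key_term (K : ℕ) (k : Fin K) (σ : ℝ) (hσ : 0 < σ) (gs : Fin K → ℝ)
    (hg : ∀ i, 0 < gs i) (r : Fin K → ℝ) (hr : ∀ i, 0 ≤ r i) :
    Real.logb 2 (1 + r k * gs k / (σ + ∑ i ∈ Finset.univ.erase k, r i * gs i))
      = Real.logb 2 (σ + ∑ i, r i * gs i)
        - Real.logb 2 (σ + ∑ i ∈ Finset.univ.erase k, r i * gs i) := by
  have hA : 0 < σ + ∑ i ∈ Finset.univ.erase k, r i * gs i := by
    have : 0 ≤ ∑ i ∈ Finset.univ.erase k, r i * gs i :=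
      Finset.sum_nonneg fun i _ => mul_nonneg (hr i) (hg i).le
    linarith
  have hx : 0 ≤ r k * gs k := mul_nonneg (hr k) (hg k).le
  have hsum : (∑ i ∈ Finset.univ.erase k, r i * gs i) + r k * gs k = ∑ i, r i * gs i :=
    Finset.sum_erase_add _ _ (Finset.mem_univ k)
  have h1 : 1 + r k * gs k / (σ + ∑ i ∈ Finset.univ.erase k, r i * gs i)
      = (σ + ∑ i, r i * gs i) / (σ + ∑ i ∈ Finset.univ.erase k, r i * gs i) := by
    rw [one_add_div (ne_of_gt hA)]
    congr 1
    linarith [hsum]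
  rw [h1, Real.logb_div (by linarith) (ne_of_gt hA)]

/-- The function φ is an exact potential for the parallel MAC spectral-efficiency game:
any unilateral deviation of player `k` from `p k` to `q` changes the utility of `k`
exactly as it changes `φ`. -/
theorem potential_is_exact (K S : ℕ)
    (g : Fin K → Fin S → ℝ) (σ2 B : Fin S → ℝ)
    (hg : ∀ k s, 0 < g k s) (hσ : ∀ s, 0 < σ2 s) (hB : ∀ s, 0 < B s)
    (p : Fin K → Fin S → ℝ) (hp : ∀ k s, 0 ≤ p k s)
    (k : Fin K) (q : Fin S → ℝ) (hq : ∀ s, 0 ≤ q s)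
    (u : Fin K → (Fin K → Fin S → ℝ) → ℝ)
    (hu : ∀ j r, u j r = ∑ s, (B s / ∑ t, B t) *
      Real.logb 2 (1 + r j s * g j s /
        (σ2 s + ∑ i ∈ Finset.univ.erase j, r i s * g i s)))
    (φ : (Fin K → Fin S → ℝ) → ℝ)
    (hφ : ∀ r, φ r = ∑ s, (B s / ∑ t, B t) *
      Real.logb 2 (σ2 s + ∑ i, r i s * g i s)) :
    u k p - u k (Function.update p k q) = φ p - φ (Function.update p k q) := by
  have hp' : ∀ j s, 0 ≤ Function.update p k q j s := by
    intro j s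
    rcases eq_or_ne j k with rfl | h
    · simp [hq s]
    · simp [Function.update_of_ne h, hp j s]
  rw [hu, hu, hφ, hφ, ← Finset.sum_sub_distrib, ← Finset.sum_sub_distrib]
  refine Finset.sum_congr rfl fun s _ => ?_
  have e1 := key_term K k (σ2 s) (hσ s) (fun i => g i s) (fun i => hg i s)
    (fun i => p i s) (fun i => hp i s)
  have e2 := key_term K k (σ2 s) (hσ s) (fun i => g i s) (fun i => hg i s)
    (fun i => Function.update p k q i s) (fun i => hp' i s)
  have herase : ∑ i ∈ Finset.univ.erase k, Function.update p k q i s * g i s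
      = ∑ i ∈ Finset.univ.erase k, p i s * g i s := by
    refine Finset.sum_congr rfl fun i hi => ?_
    rw [Function.update_of_ne (Finset.ne_of_mem_erase hi)]
  rw [herase] at e2
  simp only [Function.update_self] at e2
  simp only [Function.update_self, herase]
  rw [e1, e2]
  ring
end

section
/- In the 2-player 2-channel channel selection game with SNR = p_max/σ², the profile (player 1 on channel 1, player 2 on channel 2) is a pure Nash equilibrium if and only if g₁₁/g₁₂ ≥ 1/(1 + SNR·g₂₂) and g₂₁/g₂₂ ≤ 1 + SNR·g₁₁. -/
/-- Utility of player `k` in the 2-player 2-channel channel selection game: spectral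
efficiency on its selected channel `c k`, with interference from the other player if
it uses the same channel. -/
noncomputable def csU (σ2 pmax : ℝ) (g : Fin 2 → Fin 2 → ℝ) (k : Fin 2)
    (c : Fin 2 → Fin 2) : ℝ :=
  (1 / 2) * Real.logb 2 (1 + pmax * g k (c k) /
    (σ2 + ∑ j ∈ Finset.univ.erase k, (if c j = c k then pmax * g j (c k) else 0)))

/-- Pure Nash equilibrium of the 2-player 2-channel channel selection game. -/
def csNE (σ2 pmax : ℝ) (g : Fin 2 → Fin 2 → ℝ) (c : Fin 2 → Fin 2) : Prop :=
  ∀ (k : Fin 2) (a : Fin 2),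
    csU σ2 pmax g k (Function.update c k a) ≤ csU σ2 pmax g k c

lemma csAux (σ2 pmax : ℝ) (hσ : 0 < σ2) (hp : 0 < pmax) (a b d : ℝ)
    (ha : 0 < a) (hb : 0 < b) (hd : 0 < d) :
    (Real.logb 2 (1 + pmax * a / (σ2 + pmax * d)) ≤ Real.logb 2 (1 + pmax * b / σ2)
      ↔ σ2 * a ≤ b * (σ2 + pmax * d)) := by
  have hden : 0 < σ2 + pmax * d := by positivity
  rw [Real.logb_le_logb (by norm_num) (by positivity) (by positivity),
    add_le_add_iff_left, div_le_div_iff₀ hden hσ]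
  constructor <;> intro h <;> nlinarith

/-- The profile (player 1 on channel 1, player 2 on channel 2) is a pure NE iff
`g₁₁/g₁₂ ≥ 1/(1 + SNR g₂₂)` and `g₂₁/g₂₂ ≤ 1 + SNR g₁₁`, where `SNR = pmax/σ²`. -/
theorem csNE_zero_one_iff (σ2 pmax : ℝ) (hσ : 0 < σ2) (hp : 0 < pmax)
    (g : Fin 2 → Fin 2 → ℝ) (hg : ∀ k s, 0 < g k s) :
    csNE σ2 pmax g ![0, 1] ↔
      (1 / (1 + pmax / σ2 * g 1 1) ≤ g 0 0 / g 0 1 ∧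
        g 1 0 / g 1 1 ≤ 1 + pmax / σ2 * g 0 0) := by
  have h1 : (1 / (1 + pmax / σ2 * g 1 1) ≤ g 0 0 / g 0 1)
      ↔ σ2 * g 0 1 ≤ g 0 0 * (σ2 + pmax * g 1 1) := by
    have hg01 := hg 0 1; have hg11 := hg 1 1
    have e : σ2 + pmax * g 1 1 = σ2 * (1 + pmax / σ2 * g 1 1) := by field_simp
    rw [div_le_div_iff₀ (by positivity) hg01, one_mul, e, mul_left_comm]
    exact (mul_le_mul_iff_right₀ hσ).symm
  have h2 : (g 1 0 / g 1 1 ≤ 1 + pmax / σ2 * g 0 0)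
      ↔ σ2 * g 1 0 ≤ g 1 1 * (σ2 + pmax * g 0 0) := by
    have hg11 := hg 1 1
    have e : σ2 + pmax * g 0 0 = σ2 * (1 + pmax / σ2 * g 0 0) := by field_simp
    rw [div_le_iff₀' hg11, e, mul_left_comm]
    exact (mul_le_mul_iff_right₀ hσ).symm
  rw [h1, h2]
  constructor
  · intro h
    have h0 := h 0 1
    have h1 := h 1 0
    simp only [csNE, csU] at h0 h1
    simp [Fin.sum_univ_two, Finset.erase_eq, Function.update] at h0 h1
    exact ⟨(csAux σ2 pmax hσ hp _ _ _ (hg 0 1) (hg 0 0) (hg 1 1)).mp h0,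
      (csAux σ2 pmax hσ hp _ _ _ (hg 1 0) (hg 1 1) (hg 0 0)).mp h1⟩
  · rintro ⟨c1, c2⟩ k a
    unfold csU
    fin_cases k <;> fin_cases a <;>
      simp [Fin.sum_univ_two, Finset.erase_eq, Function.update]
    · exact (csAux σ2 pmax hσ hp _ _ _ (hg 0 1) (hg 0 0) (hg 1 1)).mpr c1
    · exact (csAux σ2 pmax hσ hp _ _ _ (hg 1 0) (hg 1 1) (hg 0 0)).mpr c2
end

section
/- In the 2-player 2-channel channel selection game, if g₁₁/g₁₂ ≥ 1 + SNR·g₂₁ and g₂₁/g₂₂ ≥ 1 + SNR·g₁₁ (SNR = p_max/σ²), then the profile in which both players transmit on channel 1 is a pure Nash equilibrium. -/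
lemma cs_key (σ2 pmax a b c : ℝ) (hσ : 0 < σ2) (hp : 0 < pmax) (hb : 0 < b)
    (hc : 0 < c) (h : 1 + pmax / σ2 * c ≤ a / b) :
    pmax * b / σ2 ≤ pmax * a / (σ2 + pmax * c) := by
  have hd : 0 < σ2 + pmax * c := by positivity
  rw [div_le_div_iff₀ hσ hd]
  have h' : (1 + pmax / σ2 * c) * b ≤ a := (le_div_iff₀ hb).mp h
  have hs : (1 + pmax / σ2 * c) * σ2 = σ2 + pmax * c := by
    field_simp
  nlinarith [mul_le_mul_of_nonneg_right h' (le_of_lt hσ), mul_pos hp hb]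

/-- If `g₁₁/g₁₂ ≥ 1 + SNR g₂₁` and `g₂₁/g₂₂ ≥ 1 + SNR g₁₁` then both players
transmitting on channel 1 is a pure Nash equilibrium. -/
theorem csNE_both_channel_one (σ2 pmax : ℝ) (hσ : 0 < σ2) (hp : 0 < pmax)
    (g : Fin 2 → Fin 2 → ℝ) (hg : ∀ k s, 0 < g k s)
    (h1 : 1 + pmax / σ2 * g 1 0 ≤ g 0 0 / g 0 1)
    (h2 : 1 + pmax / σ2 * g 0 0 ≤ g 1 0 / g 1 1) :
    csNE σ2 pmax g (fun _ => 0) := by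
  intro k a
  fin_cases k <;> fin_cases a <;>
    simp only [csU, Function.update, Fin.isValue, Fin.sum_univ_two,
      show ((0 : Fin 2) : Fin 2) = 0 from rfl] <;>
    norm_num [show Finset.univ.erase (0:Fin 2) = {1} from by decide,
      show Finset.univ.erase (1:Fin 2) = {0} from by decide, Finset.sum_singleton]
  · -- player 0 deviates to channel 1
    have key := cs_key σ2 pmax (g 0 0) (g 0 1) (g 1 0) hσ hp (hg 0 1) (hg 1 0) h1
    have hd : (0:ℝ) < σ2 + pmax * g 1 0 := by nlinarith [mul_pos hp (hg 1 0)]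
    gcongr <;>
      nlinarith [div_pos (mul_pos hp (hg 0 1)) hσ, key]
  · -- player 1 deviates to channel 1
    have key := cs_key σ2 pmax (g 1 0) (g 1 1) (g 0 0) hσ hp (hg 1 1) (hg 0 0) h2
    have hd : (0:ℝ) < σ2 + pmax * g 0 0 := by nlinarith [mul_pos hp (hg 0 0)]
    gcongr <;>
      nlinarith [div_pos (mul_pos hp (hg 1 1)) hσ, key]
end

section
/- In the 2-player 2-channel channel selection game, whenever g ∈ A₁∩A₄, i.e., 1/(1+SNR·g₂₂) ≤ g₁₁/g₁₂ ≤ 1+SNR·g₂₁ and 1/(1+SNR·g₁₂) ≤ g₂₁/g₂₂ ≤ 1+SNR·g₁₁, both profiles (player 1 on channel 1, player 2 on channel 2) and (player 1 on channel 2, player 2 on channel 1) are pure Nash equilibria; in particular the game can have multiple pure NE. -/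
/-- Key monotonicity lemma: if `b * σ2 ≤ a * (σ2 + pmax * c)` then the interfered
rate on gain `b` is at most the clean rate on gain `a`. -/
lemma csU_key (σ2 pmax a b c : ℝ) (hσ : 0 < σ2) (hp : 0 < pmax) (hb : 0 ≤ b) (hc : 0 ≤ c)
    (h : b * σ2 ≤ a * (σ2 + pmax * c)) :
    Real.logb 2 (1 + pmax*b/(σ2+pmax*c)) ≤ Real.logb 2 (1 + pmax*a/σ2) := by
  have hd : 0 < σ2 + pmax*c := by positivity
  have hab : pmax*b/(σ2+pmax*c) ≤ pmax*a/σ2 := by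
    rw [div_le_div_iff₀ hd hσ]; nlinarith
  have hx : 0 < 1 + pmax*b/(σ2+pmax*c) := by positivity
  exact Real.logb_le_logb_of_le one_lt_two hx (by linarith)

/-- If the channel gains lie in `A₁ ∩ A₄`, both orthogonal profiles are pure Nash
equilibria; in particular the channel selection game can have multiple pure NE. -/
theorem csNE_multiple (σ2 pmax : ℝ) (hσ : 0 < σ2) (hp : 0 < pmax)
    (g : Fin 2 → Fin 2 → ℝ) (hg : ∀ k s, 0 < g k s)
    (h1 : 1 / (1 + pmax / σ2 * g 1 1) ≤ g 0 0 / g 0 1)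
    (h2 : g 0 0 / g 0 1 ≤ 1 + pmax / σ2 * g 1 0)
    (h3 : 1 / (1 + pmax / σ2 * g 0 1) ≤ g 1 0 / g 1 1)
    (h4 : g 1 0 / g 1 1 ≤ 1 + pmax / σ2 * g 0 0) :
    csNE σ2 pmax g ![0, 1] ∧ csNE σ2 pmax g ![1, 0] ∧
      (![0, 1] : Fin 2 → Fin 2) ≠ ![1, 0] := by
  have e0 : (Finset.univ.erase (0:Fin 2)) = {1} := by decide
  have e1 : (Finset.univ.erase (1:Fin 2)) = {0} := by decide
  have hX1 : 0 < 1 + pmax / σ2 * g 1 1 := by have := hg 1 1; positivity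
  have hX2 : 0 < 1 + pmax / σ2 * g 0 1 := by have := hg 0 1; positivity
  have k1 : g 0 1 * σ2 ≤ g 0 0 * (σ2 + pmax * g 1 1) := by
    have := (div_le_div_iff₀ hX1 (hg 0 1)).mp h1
    rw [one_mul] at this
    calc g 0 1 * σ2 ≤ g 0 0 * (1 + pmax / σ2 * g 1 1) * σ2 := by nlinarith
    _ = g 0 0 * (σ2 + pmax * g 1 1) := by field_simp
  have k2 : g 0 0 * σ2 ≤ g 0 1 * (σ2 + pmax * g 1 0) := by
    calc g 0 0 * σ2 ≤ g 0 1 * (1 + pmax / σ2 * g 1 0) * σ2 := by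
            nlinarith [(div_le_iff₀ (hg 0 1)).mp h2]
    _ = g 0 1 * (σ2 + pmax * g 1 0) := by field_simp
  have k3 : g 1 1 * σ2 ≤ g 1 0 * (σ2 + pmax * g 0 1) := by
    have := (div_le_div_iff₀ hX2 (hg 1 1)).mp h3
    rw [one_mul] at this
    calc g 1 1 * σ2 ≤ g 1 0 * (1 + pmax / σ2 * g 0 1) * σ2 := by nlinarith
    _ = g 1 0 * (σ2 + pmax * g 0 1) := by field_simp
  have k4 : g 1 0 * σ2 ≤ g 1 1 * (σ2 + pmax * g 0 0) := by
    calc g 1 0 * σ2 ≤ g 1 1 * (1 + pmax / σ2 * g 0 0) * σ2 := by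
            nlinarith [(div_le_iff₀ (hg 1 1)).mp h4]
    _ = g 1 1 * (σ2 + pmax * g 0 0) := by field_simp
  refine ⟨?_, ?_, ?_⟩
  · intro k a
    fin_cases k <;> fin_cases a <;>
      simp [csU, e0, e1, Function.update, Matrix.cons_val_zero, Matrix.cons_val_one,
        Matrix.head_cons]
    · exact csU_key σ2 pmax (g 0 0) (g 0 1) (g 1 1) hσ hp (hg 0 1).le (hg 1 1).le k1
    · exact csU_key σ2 pmax (g 1 1) (g 1 0) (g 0 0) hσ hp (hg 1 0).le (hg 0 0).le k4
  · intro k a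
    fin_cases k <;> fin_cases a <;>
      simp [csU, e0, e1, Function.update, Matrix.cons_val_zero, Matrix.cons_val_one,
        Matrix.head_cons]
    · exact csU_key σ2 pmax (g 0 1) (g 0 0) (g 1 0) hσ hp (hg 0 0).le (hg 1 0).le k2
    · exact csU_key σ2 pmax (g 1 0) (g 1 1) (g 0 1) hσ hp (hg 1 1).le (hg 0 1).le k3
  · intro h; have := congrFun h 0; simp at this
end

section
/- For positive reals g₁₁,g₁₂,g₂₁,g₂₂ and σ², p_max > 0 with g₁₂g₂₁ ≠ g₁₁g₂₂, the unique solution (p₁₁,p₂₂) of the 2×2 linear system 2g₁₁g₁₂·p₁₁ − (g₂₂g₁₁+g₂₁g₁₂)·p₂₂ = p_max·g₁₂(g₁₁−g₂₁)+σ²(g₁₁−g₁₂) and −(g₂₂g₁₁+g₂₁g₁₂)·p₁₁ + 2g₂₁g₂₂·p₂₂ = p_max·g₂₁(g₂₂−g₁₂)+σ²(g₂₂−g₂₁) cannot satisfy both 0 < p₁₁ < p_max and 0 < p₂₂ < p_max: if g₁₂g₂₁ − g₁₁g₂₂ < 0 then p_kk < 0 for k=1,2, and if g₁₂g₂₁ −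 g₁₁g₂₂ > 0 then p_kk > p_max for k=1,2. -/
/-- No fully interior NE in the 2×2 power allocation game when
`g₁₂g₂₁ ≠ g₁₁g₂₂`: the unique solution of the linear NE system has `p₁₁, p₂₂ < 0`
when `g₁₂g₂₁ - g₁₁g₂₂ < 0` and `p₁₁, p₂₂ > pmax` when `g₁₂g₂₁ - g₁₁g₂₂ > 0`;
in particular it cannot lie in `(0, pmax)²`. -/
theorem no_interior_NE (g11 g12 g21 g22 σ2 pmax p11 p22 : ℝ)
    (h11 : 0 < g11) (h12 : 0 < g12) (h21 : 0 < g21) (h22 : 0 < g22)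
    (hσ : 0 < σ2) (hp : 0 < pmax)
    (hdet : g12 * g21 ≠ g11 * g22)
    (heq1 : 2 * g11 * g12 * p11 - (g22 * g11 + g21 * g12) * p22
      = pmax * g12 * (g11 - g21) + σ2 * (g11 - g12))
    (heq2 : -(g22 * g11 + g21 * g12) * p11 + 2 * g21 * g22 * p22
      = pmax * g21 * (g22 - g12) + σ2 * (g22 - g21)) :
    (g12 * g21 - g11 * g22 < 0 → p11 < 0 ∧ p22 < 0) ∧
    (0 < g12 * g21 - g11 * g22 → pmax < p11 ∧ pmax < p22) ∧
    ¬((0 < p11 ∧ p11 < pmax) ∧ (0 < p22 ∧ p22 < pmax)) := by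
  set D : ℝ := g11 * g22 - g12 * g21 with hD
  have hDne : D ≠ 0 := sub_ne_zero.mpr (Ne.symm hdet)
  have key1 : D * p11 = -(pmax * g21 * (g12 + g22) + σ2 * (g21 + g22)) := by
    have h : D * (D * p11) = D * (-(pmax * g21 * (g12 + g22) + σ2 * (g21 + g22))) := by
      linear_combination (-(2*g21*g22)) * heq1 + (-(g22*g11+g21*g12)) * heq2
    exact mul_left_cancel₀ hDne h
  have key2 : D * p22 = -(pmax * g12 * (g11 + g21) + σ2 * (g11 + g12)) := by
    have h : D * (D * p22) = D * (-(pmax * g12 * (g11 + g21) + σ2 * (g11 + g12))) := by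
      linear_combination (-(g22*g11+g21*g12)) * heq1 + (-(2*g11*g12)) * heq2
    exact mul_left_cancel₀ hDne h
  have hX1 : 0 < pmax * g21 * (g12 + g22) + σ2 * (g21 + g22) := by positivity
  have hX2 : 0 < pmax * g12 * (g11 + g21) + σ2 * (g11 + g12) := by positivity
  refine ⟨?_, ?_, ?_⟩
  · intro hneg
    have hDpos : 0 < D := by simp only [hD]; linarith
    constructor
    · nlinarith [key1]
    · nlinarith [key2]
  · intro hpos
    have hDneg : D < 0 := by simp only [hD]; linarith
    constructor
    · nlinarith [key1, mul_pos hp h22, mul_pos h11 h21]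
    · nlinarith [key2, mul_pos hp h11, mul_pos h12 h22]
  · rintro ⟨⟨hp1, hp1'⟩, ⟨hp2, hp2'⟩⟩
    rcases lt_or_gt_of_ne hDne with hDneg | hDpos
    · -- D < 0 : g12*g21 - g11*g22 > 0, then p11 > pmax
      nlinarith [key1, mul_pos hp h22, mul_pos h11 h21]
    · nlinarith [key1]
end

section
/- Fix positive reals g₁₁,g₁₂,g₂₁,g₂₂ with g₂₁ > g₁₁, and for SNR > 0 define ψ(x) = 1 + SNR·x and Δ₁(SNR) = 2log₂2 − 2log₂(1 + (g₂₁/g₂₂)·ψ(g₂₂)/ψ(g₁₁)) − log₂(1 + (g₂₂/g₂₁)·ψ(g₁₁)/ψ(g₂₂)) + log₂(g₂₁/g₂₂ + ψ(g₂₁−g₁₁)). Then Δ₁(SNR) → +∞ as SNR → +∞. -/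
open Filter

lemma ratio_tendsto (a b : ℝ) (ha : 0 < a) (hb : 0 < b) :
    Tendsto (fun snr : ℝ => (1 + snr * a) / (1 + snr * b)) atTop (nhds (a / b)) := by
  have h : Tendsto (fun snr : ℝ => (snr⁻¹ + a) / (snr⁻¹ + b)) atTop
      (nhds ((0 + a) / (0 + b))) := by
    apply Tendsto.div
    · exact tendsto_inv_atTop_zero.add_const a
    · exact tendsto_inv_atTop_zero.add_const b
    · simp [hb.ne']
  rw [zero_add, zero_add] at h
  refine h.congr' ?_
  filter_upwards [eventually_gt_atTop (0:ℝ)] with x hx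
  have hx' : x ≠ 0 := hx.ne'
  field_simp

/-- With `ψ(x) = 1 + SNR·x` and `g₂₁ > g₁₁`, the spectral-efficiency gap
`Δ₁(SNR)` between the channel selection NE and the power allocation NE tends to
`+∞` as `SNR → ∞`. -/
theorem delta1_tendsto_atTop (g11 g12 g21 g22 : ℝ)
    (h11 : 0 < g11) (h12 : 0 < g12) (h21 : 0 < g21) (h22 : 0 < g22)
    (hgt : g11 < g21) :
    Tendsto (fun snr : ℝ =>
      2 * Real.logb 2 2
      - 2 * Real.logb 2 (1 + g21 / g22 * ((1 + snr * g22) / (1 + snr * g11)))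
      - Real.logb 2 (1 + g22 / g21 * ((1 + snr * g11) / (1 + snr * g22)))
      + Real.logb 2 (g21 / g22 + (1 + snr * (g21 - g11))))
      atTop atTop := by
  have hd : 0 < g21 - g11 := sub_pos.mpr hgt
  -- last term tends to atTop
  have hT2 : Tendsto (fun snr : ℝ =>
      Real.logb 2 (g21 / g22 + (1 + snr * (g21 - g11)))) atTop atTop := by
    refine (Real.tendsto_logb_atTop (by norm_num)).comp ?_
    apply tendsto_atTop_add_const_left
    apply tendsto_atTop_add_const_left
    exact Tendsto.atTop_mul_const hd tendsto_id
  -- second term tends to a limit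
  have hL1 : Tendsto (fun snr : ℝ =>
      Real.logb 2 (1 + g21 / g22 * ((1 + snr * g22) / (1 + snr * g11)))) atTop
      (nhds (Real.logb 2 (1 + g21 / g22 * (g22 / g11)))) := by
    have hc : ContinuousAt (Real.logb 2) (1 + g21 / g22 * (g22 / g11)) := by
      apply Real.continuousAt_logb
      positivity
    exact hc.tendsto.comp <| by
      exact (tendsto_const_nhds.mul (ratio_tendsto g22 g11 h22 h11)).const_add 1
  have hL2 : Tendsto (fun snr : ℝ =>
      Real.logb 2 (1 + g22 / g21 * ((1 + snr * g11) / (1 + snr * g22)))) atTop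
      (nhds (Real.logb 2 (1 + g22 / g21 * (g11 / g22)))) := by
    have hc : ContinuousAt (Real.logb 2) (1 + g22 / g21 * (g11 / g22)) := by
      apply Real.continuousAt_logb
      positivity
    exact hc.tendsto.comp <| by
      exact (tendsto_const_nhds.mul (ratio_tendsto g11 g22 h11 h22)).const_add 1
  have hT1 : Tendsto (fun snr : ℝ =>
      2 * Real.logb 2 2
      - 2 * Real.logb 2 (1 + g21 / g22 * ((1 + snr * g22) / (1 + snr * g11)))
      - Real.logb 2 (1 + g22 / g21 * ((1 + snr * g11) / (1 + snr * g22)))) atTop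
      (nhds (2 * Real.logb 2 2 - 2 * Real.logb 2 (1 + g21 / g22 * (g22 / g11))
        - Real.logb 2 (1 + g22 / g21 * (g11 / g22)))) := by
    exact ((tendsto_const_nhds.sub (hL1.const_mul 2)).sub hL2)
  exact hT1.add_atTop hT2
end

section
/- The optimization problem maximize Σ_{s=1}^S b_s log₂(μN₀b_s + x_s p_max Ω_s) over x ∈ ℝ₊^S with Σ_s x_s = 1 is a strictly concave problem with a unique maximizer, and the maximizer has the water-filling form x_s = b_s·max(0, 1/β − μN₀/(p_max Ω_s)) for some β > 0 chosen so that Σ_s x_s = 1. -/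
open Real Finset Set

-- concavity per-term lemma
lemma wf_concave_term (b c d u v p q : ℝ) (hb : 0 < b) (hc : 0 < c) (hd : 0 < d)
    (hu : 0 ≤ u) (hv : 0 ≤ v) (hp : 0 < p) (hq : 0 < q) (hpq : p + q = 1) :
    p * (b * Real.logb 2 (c + u * d)) + q * (b * Real.logb 2 (c + v * d)) ≤
      b * Real.logb 2 (c + (p * u + q * v) * d) := by
  have hA : (0:ℝ) < c + u * d := by positivity
  have hB : (0:ℝ) < c + v * d := by positivity
  have hlog := (strictConcaveOn_log_Ioi.concaveOn).2 (mem_Ioi.mpr hA) (mem_Ioi.mpr hB)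
    hp.le hq.le hpq
  simp only [smul_eq_mul] at hlog
  have harg : p * (c + u * d) + q * (c + v * d) = c + (p * u + q * v) * d := by
    linear_combination c * hpq
  rw [harg] at hlog
  have hl2 : (0:ℝ) < Real.log 2 := Real.log_pos one_lt_two
  have hbl : (0:ℝ) ≤ b / Real.log 2 := by positivity
  simp only [Real.logb]
  calc p * (b * (Real.log (c + u * d) / Real.log 2))
        + q * (b * (Real.log (c + v * d) / Real.log 2))
      = (b / Real.log 2) * (p * Real.log (c + u * d) + q * Real.log (c + v * d)) := by ring
    _ ≤ (b / Real.log 2) * Real.log (c + (p * u + q * v) * d) := by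
        exact mul_le_mul_of_nonneg_left hlog hbl
    _ = b * (Real.log (c + (p * u + q * v) * d) / Real.log 2) := by ring

lemma wf_concave_term_strict (b c d u v p q : ℝ) (hb : 0 < b) (hc : 0 < c) (hd : 0 < d)
    (hu : 0 ≤ u) (hv : 0 ≤ v) (huv : u ≠ v) (hp : 0 < p) (hq : 0 < q) (hpq : p + q = 1) :
    p * (b * Real.logb 2 (c + u * d)) + q * (b * Real.logb 2 (c + v * d)) <
      b * Real.logb 2 (c + (p * u + q * v) * d) := by
  have hA : (0:ℝ) < c + u * d := by positivity
  have hB : (0:ℝ) < c + v * d := by positivity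
  have hne : c + u * d ≠ c + v * d := by
    intro h
    exact huv (by
      have : u * d = v * d := by linarith
      exact mul_right_cancel₀ hd.ne' this)
  have hlog := strictConcaveOn_log_Ioi.2 (mem_Ioi.mpr hA) (mem_Ioi.mpr hB) hne hp hq hpq
  simp only [smul_eq_mul] at hlog
  have harg : p * (c + u * d) + q * (c + v * d) = c + (p * u + q * v) * d := by
    linear_combination c * hpq
  rw [harg] at hlog
  have hl2 : (0:ℝ) < Real.log 2 := Real.log_pos one_lt_two
  have hbl : (0:ℝ) < b / Real.log 2 := by positivity
  simp only [Real.logb]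
  calc p * (b * (Real.log (c + u * d) / Real.log 2))
        + q * (b * (Real.log (c + v * d) / Real.log 2))
      = (b / Real.log 2) * (p * Real.log (c + u * d) + q * Real.log (c + v * d)) := by ring
    _ < (b / Real.log 2) * Real.log (c + (p * u + q * v) * d) := by
        exact (mul_lt_mul_iff_right₀ hbl).mpr hlog
    _ = b * (Real.log (c + (p * u + q * v) * d) / Real.log 2) := by ring

-- gradient/tangent-line per-term lemma
lemma wf_grad_term (b d t a y : ℝ) (hb : 0 < b) (hd : 0 < d) (ht : 0 < t) (ha : 0 < a)
    (hy : 0 ≤ y) :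
    b * Real.logb 2 (b * d * a + y * d) ≤
      b * Real.logb 2 (b * d * a + (b * max 0 (t - a)) * d)
        + (1 / (t * Real.log 2)) * (y - b * max 0 (t - a)) := by
  set x := b * max 0 (t - a) with hx
  have hxnn : 0 ≤ x := by positivity
  have hA : (0:ℝ) < b * d * a + y * d := by positivity
  have hB : (0:ℝ) < b * d * a + x * d := by positivity
  have hl2 : (0:ℝ) < Real.log 2 := Real.log_pos one_lt_two
  -- log A ≤ log B + (A - B)/B
  have hlog : Real.log (b * d * a + y * d) ≤ Real.log (b * d * a + x * d)
      + ((b * d * a + y * d) - (b * d * a + x * d)) / (b * d * a + x * d) := by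
    have h1 : Real.log ((b * d * a + y * d) / (b * d * a + x * d)) ≤
        (b * d * a + y * d) / (b * d * a + x * d) - 1 :=
      Real.log_le_sub_one_of_pos (div_pos hA hB)
    rw [Real.log_div hA.ne' hB.ne'] at h1
    have : (b * d * a + y * d) / (b * d * a + x * d) - 1
        = ((b * d * a + y * d) - (b * d * a + x * d)) / (b * d * a + x * d) := by
      field_simp
    linarith [this ▸ h1]
  simp only [Real.logb]
  have hstep : b * (((b * d * a + y * d) - (b * d * a + x * d)) / (b * d * a + x * d)) / Real.log 2
      ≤ (1 / (t * Real.log 2)) * (y - x) := by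
    rcases le_or_gt a t with hat | hat
    · have hmax : max 0 (t - a) = t - a := max_eq_right (by linarith)
      have hBval : b * d * a + x * d = b * d * t := by rw [hx, hmax]; ring
      rw [hBval]
      have : b * (((b * d * a + y * d) - b * d * t) / (b * d * t)) / Real.log 2
          = (1 / (t * Real.log 2)) * (y - x) := by
        rw [hx, hmax]
        field_simp
        ring
      linarith [this.le]
    · have hmax : max 0 (t - a) = 0 := max_eq_left (by linarith)
      have hx0 : x = 0 := by rw [hx, hmax]; ring
      rw [hx0]
      have h1 : b * (((b * d * a + y * d) - (b * d * a + 0 * d)) / (b * d * a + 0 * d)) / Real.log 2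
          = y / (a * Real.log 2) := by
        field_simp
        ring
      rw [h1]
      have h2 : (1 / (t * Real.log 2)) * (y - 0) = y / (t * Real.log 2) := by ring
      rw [h2]
      gcongr

  calc b * (Real.log (b * d * a + y * d) / Real.log 2)
      ≤ b * ((Real.log (b * d * a + x * d)
          + ((b * d * a + y * d) - (b * d * a + x * d)) / (b * d * a + x * d)) / Real.log 2) := by
        apply mul_le_mul_of_nonneg_left _ hb.le
        exact div_le_div_of_nonneg_right hlog hl2.le
    _ = b * (Real.log (b * d * a + x * d) / Real.log 2)
        + b * (((b * d * a + y * d) - (b * d * a + x * d)) / (b * d * a + x * d)) / Real.log 2 := by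
        ring
    _ ≤ b * (Real.log (b * d * a + x * d) / Real.log 2) + (1 / (t * Real.log 2)) * (y - x) := by
        linarith [hstep]

/-- The asymptotic channel-selection potential maximization over the simplex is a
strictly concave problem with a unique maximizer, and the maximizer has the
water-filling form `x_s = b_s · max 0 (1/β - μN₀/(pmax Ω_s))`. -/
theorem asymptotic_waterfilling (S : ℕ) (hS : 0 < S)
    (b : Fin S → ℝ) (hb : ∀ s, 0 < b s) (hbsum : ∑ s, b s = 1)
    (μ N0 pmax : ℝ) (Ω : Fin S → ℝ)
    (hμ : 0 < μ) (hN : 0 < N0) (hp : 0 < pmax) (hΩ : ∀ s, 0 < Ω s)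
    (f : (Fin S → ℝ) → ℝ)
    (hf : ∀ x, f x = ∑ s, b s * Real.logb 2 (μ * N0 * b s + x s * pmax * Ω s))
    (D : Set (Fin S → ℝ))
    (hD : D = {x | (∀ s, 0 ≤ x s) ∧ ∑ s, x s = 1}) :
    StrictConcaveOn ℝ D f ∧
    (∃! x : Fin S → ℝ, x ∈ D ∧ ∀ y ∈ D, f y ≤ f x) ∧
    (∀ x ∈ D, (∀ y ∈ D, f y ≤ f x) →
      ∃ β > 0, ∀ s, x s = b s * max 0 (1 / β - μ * N0 / (pmax * Ω s))) := by
  have hDs : D = stdSimplex ℝ (Fin S) := hD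
  -- abbreviations
  set a : Fin S → ℝ := fun s => μ * N0 / (pmax * Ω s) with ha_def
  have ha : ∀ s, 0 < a s := fun s => by
    simp only [ha_def]; have := hΩ s; positivity
  have hcd : ∀ s, μ * N0 * b s = b s * (pmax * Ω s) * a s := by
    intro s
    have h1 : pmax * Ω s ≠ 0 := by have := hΩ s; positivity
    simp only [ha_def]
    field_simp [(hΩ s).ne']
  -- Part 1: strict concavity
  have hconc : StrictConcaveOn ℝ D f := by
    refine ⟨hDs ▸ convex_stdSimplex ℝ (Fin S), ?_⟩
    intro x hx y hy hxy p q hp' hq' hpq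
    rw [hDs] at hx hy
    simp only [hf, smul_eq_mul, Pi.add_apply, Pi.smul_apply]
    rw [Finset.mul_sum, Finset.mul_sum, ← Finset.sum_add_distrib]
    obtain ⟨s0, hs0⟩ := Function.ne_iff.mp hxy
    refine Finset.sum_lt_sum (fun s _ => ?_) ⟨s0, Finset.mem_univ s0, ?_⟩
    · have h := wf_concave_term (b s) (μ * N0 * b s) (pmax * Ω s) (x s) (y s) p q
        (hb s) (by have := hb s; positivity) (by have := hΩ s; positivity)
        (hx.1 s) (hy.1 s) hp' hq' hpq
      calc p * (b s * Real.logb 2 (μ * N0 * b s + x s * pmax * Ω s))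
            + q * (b s * Real.logb 2 (μ * N0 * b s + y s * pmax * Ω s))
          = p * (b s * Real.logb 2 (μ * N0 * b s + x s * (pmax * Ω s)))
            + q * (b s * Real.logb 2 (μ * N0 * b s + y s * (pmax * Ω s))) := by ring_nf
        _ ≤ b s * Real.logb 2 (μ * N0 * b s + (p * x s + q * y s) * (pmax * Ω s)) := h
        _ = b s * Real.logb 2 (μ * N0 * b s + (p * x s + q * y s) * pmax * Ω s) := by ring_nf
    · have h := wf_concave_term_strict (b s0) (μ * N0 * b s0) (pmax * Ω s0) (x s0) (y s0) p q
        (hb s0) (by have := hb s0; positivity) (by have := hΩ s0; positivity)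
        (hx.1 s0) (hy.1 s0) hs0 hp' hq' hpq
      calc p * (b s0 * Real.logb 2 (μ * N0 * b s0 + x s0 * pmax * Ω s0))
            + q * (b s0 * Real.logb 2 (μ * N0 * b s0 + y s0 * pmax * Ω s0))
          = p * (b s0 * Real.logb 2 (μ * N0 * b s0 + x s0 * (pmax * Ω s0)))
            + q * (b s0 * Real.logb 2 (μ * N0 * b s0 + y s0 * (pmax * Ω s0))) := by ring_nf
        _ < b s0 * Real.logb 2 (μ * N0 * b s0 + (p * x s0 + q * y s0) * (pmax * Ω s0)) := h
        _ = b s0 * Real.logb 2 (μ * N0 * b s0 + (p * x s0 + q * y s0) * pmax * Ω s0) := by ring_nf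
  -- water level: find t > 0 with ∑ b s * max 0 (t - a s) = 1
  set h : ℝ → ℝ := fun t => ∑ s, b s * max 0 (t - a s) with hh_def
  have hhcont : Continuous h := by
    apply continuous_finset_sum
    intro s _
    exact continuous_const.mul (continuous_const.max (continuous_id.sub continuous_const))
  have hh0 : h 0 = 0 := by
    simp only [hh_def]
    refine Finset.sum_eq_zero fun s _ => ?_
    rw [max_eq_left (by linarith [ha s])]
    ring
  set t1 : ℝ := 1 + ∑ s, a s with ht1_def
  have hht1 : 1 ≤ h t1 := by
    rw [← hbsum]
    refine Finset.sum_le_sum fun s _ => ?_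
    have h1 : a s ≤ ∑ s', a s' :=
      Finset.single_le_sum (fun i _ => (ha i).le) (Finset.mem_univ s)
    have h2 : (1:ℝ) ≤ t1 - a s := by rw [ht1_def]; linarith
    rw [max_eq_right (by linarith)]
    nlinarith [hb s]
  have ht1pos : (0:ℝ) ≤ t1 := by
    have : (0:ℝ) ≤ ∑ s, a s := Finset.sum_nonneg fun s _ => (ha s).le
    rw [ht1_def]; linarith
  obtain ⟨t, htmem, htval⟩ : ∃ t ∈ Set.Icc (0:ℝ) t1, h t = 1 :=
    intermediate_value_Icc ht1pos hhcont.continuousOn ⟨by rw [hh0]; norm_num, hht1⟩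
  have ht : 0 < t := by
    rcases lt_or_eq_of_le htmem.1 with h' | h'
    · exact h'
    · exfalso; rw [← h', hh0] at htval; norm_num at htval
  -- the optimizer
  set xopt : Fin S → ℝ := fun s => b s * max 0 (t - a s) with hxopt_def
  have hxoptD : xopt ∈ D := by
    rw [hD]
    exact ⟨fun s => by have := (hb s).le; positivity, htval⟩
  have hxoptmax : ∀ y ∈ D, f y ≤ f xopt := by
    intro y hy
    rw [hD] at hy
    have key : ∀ s, b s * Real.logb 2 (μ * N0 * b s + y s * pmax * Ω s) ≤
        b s * Real.logb 2 (μ * N0 * b s + xopt s * pmax * Ω s)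
          + (1 / (t * Real.log 2)) * (y s - xopt s) := by
      intro s
      have h := wf_grad_term (b s) (pmax * Ω s) t (a s) (y s)
        (hb s) (by have := hΩ s; positivity) ht (ha s) (hy.1 s)
      have e1 : μ * N0 * b s + y s * pmax * Ω s
          = b s * (pmax * Ω s) * a s + y s * (pmax * Ω s) := by rw [hcd s]; ring
      have e2 : μ * N0 * b s + xopt s * pmax * Ω s
          = b s * (pmax * Ω s) * a s + (b s * max 0 (t - a s)) * (pmax * Ω s) := by
        rw [hcd s, hxopt_def]; ring
      rw [e1, e2]
      exact h
    have hsum : ∑ s, (y s - xopt s) = 0 := by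
      rw [Finset.sum_sub_distrib, hy.2]
      rw [hD] at hxoptD
      rw [hxoptD.2]; ring
    calc f y = ∑ s, b s * Real.logb 2 (μ * N0 * b s + y s * pmax * Ω s) := hf y
      _ ≤ ∑ s, (b s * Real.logb 2 (μ * N0 * b s + xopt s * pmax * Ω s)
            + (1 / (t * Real.log 2)) * (y s - xopt s)) :=
          Finset.sum_le_sum fun s _ => key s
      _ = f xopt + (1 / (t * Real.log 2)) * ∑ s, (y s - xopt s) := by
          rw [Finset.sum_add_distrib, hf, ← Finset.mul_sum]
      _ = f xopt := by rw [hsum]; ring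
  -- uniqueness
  have huniq : ∀ x ∈ D, (∀ y ∈ D, f y ≤ f x) → x = xopt := by
    intro x hx hmax
    exact hconc.eq_of_isMaxOn (isMaxOn_iff.mpr fun z hz => hmax z hz)
      (isMaxOn_iff.mpr fun z hz => hxoptmax z hz) hx hxoptD
  refine ⟨hconc, ⟨xopt, ⟨hxoptD, hxoptmax⟩, fun y hy => huniq y hy.1 hy.2⟩, ?_⟩
  intro x hx hmax
  refine ⟨1 / t, by positivity, fun s => ?_⟩
  rw [huniq x hx hmax, hxopt_def]
  rw [one_div_one_div]
end

section
/- If Ω_s = Ω for all s in the asymptotic potential maximization problem (maximize Σ_s b_s log₂(μN₀b_s + x_s p_max Ω) subject to x_s ≥ 0, Σ_s x_s = 1), then the unique maximizer is x_s = b_s for every s; i.e., at equilibrium the fraction of transmitters on each channel equals its fraction of total bandwidth. -/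
open Finset

private lemma logb_term_bound (β K A : ℝ) (hβ : 0 < β) (hK : 0 < K) (hA : 0 < A) :
    (β * Real.logb 2 A - β * Real.logb 2 (β * K) ≤ (A - β * K) / (K * Real.log 2)) ∧
    (A ≠ β * K → β * Real.logb 2 A - β * Real.logb 2 (β * K) < (A - β * K) / (K * Real.log 2)) := by
  have hM : 0 < β * K := mul_pos hβ hK
  have hlog2 : (0:ℝ) < Real.log 2 := Real.log_pos (by norm_num)
  have hdiv : 0 < A / (β * K) := div_pos hA hM
  have hdivlog : Real.log (A / (β * K)) = Real.log A - Real.log (β * K) :=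
    Real.log_div hA.ne' hM.ne'
  have hratio : A / (β * K) - 1 = (A - β * K) / (β * K) := by field_simp
  have h2le : β * (Real.log A - Real.log (β * K)) ≤ (A - β * K) / K := by
    have hle : Real.log (A / (β * K)) ≤ A / (β * K) - 1 := Real.log_le_sub_one_of_pos hdiv
    rw [hdivlog, hratio] at hle
    have := mul_le_mul_of_nonneg_left hle hβ.le
    have heq : β * ((A - β * K) / (β * K)) = (A - β * K) / K := by
      field_simp
    linarith [heq ▸ this]
  have key : ∀ (h : β * (Real.log A - Real.log (β * K)) ≤ (A - β * K) / K),
      β * Real.logb 2 A - β * Real.logb 2 (β * K) ≤ (A - β * K) / (K * Real.log 2) := by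
    intro h
    have e1 : β * Real.logb 2 A - β * Real.logb 2 (β * K)
        = (β * (Real.log A - Real.log (β * K))) / Real.log 2 := by
      simp [Real.logb]; ring
    have e2 : (A - β * K) / (K * Real.log 2) = ((A - β * K) / K) / Real.log 2 := by
      rw [div_div]
    rw [e1, e2]
    gcongr
  refine ⟨key h2le, ?_⟩
  intro hne
  have hne1 : A / (β * K) ≠ 1 := by
    intro h
    exact hne (by field_simp at h; linarith)
  have hlt : Real.log (A / (β * K)) < A / (β * K) - 1 :=
    Real.log_lt_sub_one_of_pos hdiv hne1
  rw [hdivlog, hratio] at hlt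
  have h2lt : β * (Real.log A - Real.log (β * K)) < (A - β * K) / K := by
    have := mul_lt_mul_of_pos_left hlt hβ
    have heq : β * ((A - β * K) / (β * K)) = (A - β * K) / K := by
      field_simp
    linarith [heq ▸ this]
  have e1 : β * Real.logb 2 A - β * Real.logb 2 (β * K)
      = (β * (Real.log A - Real.log (β * K))) / Real.log 2 := by
    simp [Real.logb]; ring
  have e2 : (A - β * K) / (K * Real.log 2) = ((A - β * K) / K) / Real.log 2 := by
    rw [div_div]
  rw [e1, e2]
  gcongr

/-- When all channels have the same statistics (`Ω_s = Ω`), the unique maximizer of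
the asymptotic potential over the simplex is `x_s = b_s`: the fraction of
transmitters on each channel equals its fraction of the total bandwidth. -/
theorem equal_statistics_maximizer (S : ℕ) (hS : 0 < S)
    (b : Fin S → ℝ) (hb : ∀ s, 0 < b s) (hbsum : ∑ s, b s = 1)
    (μ N0 pmax Ω : ℝ)
    (hμ : 0 < μ) (hN : 0 < N0) (hp : 0 < pmax) (hΩ : 0 < Ω)
    (f : (Fin S → ℝ) → ℝ)
    (hf : ∀ x, f x = ∑ s, b s * Real.logb 2 (μ * N0 * b s + x s * pmax * Ω))
    (D : Set (Fin S → ℝ))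
    (hD : D = {x | (∀ s, 0 ≤ x s) ∧ ∑ s, x s = 1}) :
    b ∈ D ∧ (∀ y ∈ D, f y ≤ f b) ∧
      ∀ x ∈ D, (∀ y ∈ D, f y ≤ f x) → x = b := by
  have hK : (0:ℝ) < μ * N0 + pmax * Ω := by positivity
  have hlog2 : (0:ℝ) < Real.log 2 := Real.log_pos (by norm_num)
  set K := μ * N0 + pmax * Ω with hKdef
  have hbD : b ∈ D := by rw [hD]; exact ⟨fun s => (hb s).le, hbsum⟩
  have key : ∀ y : Fin S → ℝ, (∀ s, 0 ≤ y s) → ∑ s, y s = 1 →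
      f y ≤ f b ∧ (y ≠ b → f y < f b) := by
    intro y hy hysum
    have hA : ∀ s, 0 < μ * N0 * b s + y s * pmax * Ω := fun s => by
      have h1 := hb s; have h2 := hy s; positivity
    have hterm : ∀ s, b s * Real.logb 2 (μ * N0 * b s + y s * pmax * Ω)
        - b s * Real.logb 2 (μ * N0 * b s + b s * pmax * Ω)
        ≤ ((y s - b s) * (pmax * Ω)) / (K * Real.log 2) := by
      intro s
      have hMrw : μ * N0 * b s + b s * pmax * Ω = b s * K := by rw [hKdef]; ring
      have hnum : μ * N0 * b s + y s * pmax * Ω - b s * K = (y s - b s) * (pmax * Ω) := by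
        rw [hKdef]; ring
      rw [hMrw, ← hnum]
      exact (logb_term_bound (b s) K _ (hb s) hK (hA s)).1
    have htermlt : ∀ s, y s ≠ b s →
        b s * Real.logb 2 (μ * N0 * b s + y s * pmax * Ω)
        - b s * Real.logb 2 (μ * N0 * b s + b s * pmax * Ω)
        < ((y s - b s) * (pmax * Ω)) / (K * Real.log 2) := by
      intro s hne
      have hMrw : μ * N0 * b s + b s * pmax * Ω = b s * K := by rw [hKdef]; ring
      have hnum : μ * N0 * b s + y s * pmax * Ω - b s * K = (y s - b s) * (pmax * Ω) := by
        rw [hKdef]; ring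
      rw [hMrw, ← hnum]
      refine (logb_term_bound (b s) K _ (hb s) hK (hA s)).2 ?_
      intro h
      apply hne
      have : y s * (pmax * Ω) = b s * (pmax * Ω) := by rw [hKdef] at h; nlinarith
      have hpΩ : (0:ℝ) < pmax * Ω := by positivity
      exact mul_right_cancel₀ hpΩ.ne' this
    have hRHSsum : ∑ s, ((y s - b s) * (pmax * Ω)) / (K * Real.log 2) = 0 := by
      rw [← Finset.sum_div, ← Finset.sum_mul, Finset.sum_sub_distrib, hysum, hbsum]
      simp
    have hdiff : f y - f b = ∑ s, (b s * Real.logb 2 (μ * N0 * b s + y s * pmax * Ω)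
        - b s * Real.logb 2 (μ * N0 * b s + b s * pmax * Ω)) := by
      rw [hf, hf, ← Finset.sum_sub_distrib]
    constructor
    · have hle : f y - f b ≤ 0 := by
        rw [hdiff, ← hRHSsum]
        exact Finset.sum_le_sum fun s _ => hterm s
      linarith
    · intro hne
      obtain ⟨s0, hs0⟩ : ∃ s, y s ≠ b s := by
        by_contra h
        push_neg at h
        exact hne (funext h)
      have hlt : f y - f b < 0 := by
        rw [hdiff, ← hRHSsum]
        exact Finset.sum_lt_sum (fun s _ => hterm s) ⟨s0, Finset.mem_univ _, htermlt s0 hs0⟩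
      linarith
  refine ⟨hbD, ?_, ?_⟩
  · intro y hy
    rw [hD] at hy
    exact (key y hy.1 hy.2).1
  · intro x hx hmax
    by_contra hne
    rw [hD] at hx
    have h1 := (key x hx.1 hx.2).2 hne
    have h2 := hmax b hbD
    linarith
end
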